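/- arXiv:1603.02882 — 2 statements merged into one kernel-verified Lean document; each statement's English description precedes it below -/
import Mathlib

section
/- Let (X, d) be a Polish space. For probability measures μ, ν in the Wasserstein space of order 1, the Wasserstein metric W₁ admits the Kantorovich–Rubinstein dual representation: W₁(μ, ν) = sup over all 1-Lipschitz functions f : X → ℝ of (∫ f dμ − ∫ f dν). -/
open MeasureTheory

/-- The Wasserstein distance of order 1, defined as the infimum of expected distances
over all couplings. -/
noncomputable def W1 {X : Type*} [MetricSpace X] [MeasurableSpace X] (μ ν : Measure X) : ℝ :=
  sInf {c : ℝ | ∃ π : Measure (X × X), IsProbabilityMeasure π ∧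
    π.map Prod.fst = μ ∧ π.map Prod.snd = ν ∧ c = ∫ p, dist p.1 p.2 ∂π}

/-- Membership in the Wasserstein space of order 1: a Borel probability measure with
finite first moment. -/
def MemP1 {X : Type*} [MetricSpace X] [MeasurableSpace X] (x₀ : X) (μ : Measure X) : Prop :=
  IsProbabilityMeasure μ ∧ Integrable (fun x => dist x₀ x) μ

/-!
Weak duality `∫ f dμ - ∫ f dν ≤ ∫ d dπ` holds for every coupling `π` and every 1-Lipschitz `f`.
For the converse, quantize: a simple function `g` with `∫ d(y, g y)` small under `μ` and `ν`
reduces the problem to finitely many points. There an optimal discrete plan exists by compactness,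
and its support is cyclically monotone, so Rockafellar's construction (the least cost of a chain
of plan edges from a base point) gives a 1-Lipschitz potential `f` with `f x - f y = d(x, y)` on
the support; hence the cost of the plan is `∑ f (a - b)`. Gluing the conditional laws of `μ` and
`ν` on the fibres of `g` along the plan gives a coupling whose cost exceeds the discrete one by at
most the quantization errors.
-/

open ProbabilityTheory Filter Topology

lemma LipschitzWith.sub_le_dist {X : Type*} [PseudoMetricSpace X] {f : X → ℝ}
    (hf : LipschitzWith 1 f) (a b : X) : f a - f b ≤ dist a b := by
  simpa [Real.dist_eq] using (le_abs_self _).trans (hf.dist_le_mul a b)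

lemma csInf_eq_csSup_of_le_of_approx {S T : Set ℝ} (hS : S.Nonempty) (hT : T.Nonempty)
    (hle : ∀ c ∈ S, ∀ t ∈ T, t ≤ c) (happrox : ∀ ε > 0, ∃ c ∈ S, ∃ t ∈ T, c ≤ t + ε) :
    sInf S = sSup T := by
  have hSb : BddBelow S := ⟨_, fun c hc => hle c hc _ hT.some_mem⟩
  have hTb : BddAbove T := ⟨_, fun t ht => hle _ hS.some_mem t ht⟩
  refine le_antisymm (le_of_forall_pos_le_add fun ε hε => ?_)
    (csSup_le hT fun t ht => le_csInf hS fun c hc => hle c hc t ht)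
  obtain ⟨c, hc, t, ht, hct⟩ := happrox ε hε
  exact (csInf_le hSb hc).trans (hct.trans (by gcongr; exact le_csSup hTb ht))

section Chains
variable {ι X : Type*} [MetricSpace X] (x : ι → X)

/-- `chainCost x z [(s₁, t₁), …, (sₖ, tₖ)] y` is
`d(z, s₁) - d(s₁, t₁) + d(t₁, s₂) - ⋯ - d(sₖ, tₖ) + d(tₖ, y)`, writing `sᵢ, tᵢ` for `x sᵢ, x tᵢ`. -/
def chainCost : X → List (ι × ι) → X → ℝ
  | z, [], y => dist z y
  | z, e :: L, y => dist z (x e.1) - dist (x e.1) (x e.2) + chainCost (x e.2) L y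

lemma chainCost_append_cons (z : X) (A : List (ι × ι)) (e : ι × ι) (B : List (ι × ι)) (y : X) :
    chainCost x z (A ++ e :: B) y =
      chainCost x z A (x e.1) - dist (x e.1) (x e.2) + chainCost x (x e.2) B y := by
  induction A generalizing z with
  | nil => simp [chainCost]
  | cons c A ih => simp only [List.cons_append, chainCost, ih]; ring

lemma chainCost_concat (z : X) (A : List (ι × ι)) (e : ι × ι) (y : X) :
    chainCost x z (A ++ [e]) y =
      chainCost x z A (x e.1) - dist (x e.1) (x e.2) + dist (x e.2) y :=
  chainCost_append_cons x z A e [] y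

lemma chainCost_le_add (z : X) (L : List (ι × ι)) (y y' : X) :
    chainCost x z L y ≤ chainCost x z L y' + dist y y' := by
  induction L generalizing z with
  | nil => simpa [chainCost, dist_comm y] using dist_triangle z y' y
  | cons e L ih => simp only [chainCost]; linarith [ih (x e.2)]

/-- Cyclical monotonicity of `E` for the cost `d`, in chain form: closing a chain `M` of edges of
`E` into a cycle through `e ∈ E` costs at least as much as `e` itself. -/
def IsCyclicallyMonotone (E : Set (ι × ι)) : Prop :=
  ∀ e ∈ E, ∀ M : List (ι × ι), (∀ c ∈ M, c ∈ E) →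
    dist (x e.1) (x e.2) ≤ chainCost x (x e.2) M (x e.1)

variable {x} {E : Set (ι × ι)}

theorem IsCyclicallyMonotone.exists_nodup_chainCost_le (hE : IsCyclicallyMonotone x E)
    (L : List (ι × ι)) (hL : ∀ c ∈ L, c ∈ E) (z y : X) :
    ∃ L' : List (ι × ι), L'.Nodup ∧ (∀ c ∈ L', c ∈ E) ∧ chainCost x z L' y ≤ chainCost x z L y := by
  induction hn : L.length using Nat.strong_induction_on generalizing L with
  | _ n ih =>
  by_cases hnd : L.Nodup
  · exact ⟨L, hnd, hL, le_rfl⟩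
  obtain ⟨e, he⟩ : ∃ e, [e, e].Sublist L := by simpa [List.nodup_iff_sublist] using hnd
  obtain ⟨r₁, r₂, rfl, h₁, h₂⟩ := List.cons_sublist_iff.1 he
  obtain ⟨A, M, rfl⟩ := List.append_of_mem h₁
  obtain ⟨B, N, rfl⟩ := List.append_of_mem (List.singleton_sublist.1 h₂)
  -- cutting out the cycle `e, M ++ B` does not increase the cost
  have hcut : chainCost x z (A ++ e :: N) y ≤ chainCost x z (A ++ e :: M ++ (B ++ e :: N)) y := by
    have hcyc := hE e (hL e (by simp)) (M ++ B) fun c hc => hL c (by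
      simp only [List.mem_append, List.mem_cons] at hc ⊢; tauto)
    rw [show A ++ e :: M ++ (B ++ e :: N) = A ++ e :: (M ++ B ++ e :: N) by simp,
      chainCost_append_cons, chainCost_append_cons, chainCost_append_cons x (x e.2)]
    linarith
  obtain ⟨L', hnd', hL', hle⟩ := ih _
    (by simp only [← hn, List.length_append, List.length_cons]; omega) (A ++ e :: N)
    (fun c hc => hL c (by simp only [List.mem_append, List.mem_cons] at hc ⊢; tauto)) rfl
  exact ⟨L', hnd', hL', hle.trans hcut⟩

theorem IsCyclicallyMonotone.exists_lipschitzWith_potential [Finite ι] [Nonempty X]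
    (hE : IsCyclicallyMonotone x E) :
    ∃ f : X → ℝ, LipschitzWith 1 f ∧ ∀ e ∈ E, f (x e.1) - f (x e.2) = dist (x e.1) (x e.2) := by
  cases nonempty_fintype ι
  obtain ⟨z₀⟩ := ‹Nonempty X›
  -- Rockafellar's potential, the least cost of a chain from `z₀`; by
  -- `exists_nodup_chainCost_le` nodup chains suffice, and there are finitely many of them
  let Chain := {L : List (ι × ι) // L.Nodup ∧ ∀ c ∈ L, c ∈ E}
  have : Finite Chain := Finite.of_injective
    (fun L : Chain => (⟨L.1, L.2.1⟩ : {L : List (ι × ι) // L.Nodup}))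
    fun _ _ h => Subtype.ext (Subtype.mk.inj h)
  have : Nonempty Chain := ⟨⟨[], List.nodup_nil, by simp⟩⟩
  let f : X → ℝ := fun y => ⨅ L : Chain, chainCost x z₀ L.1 y
  have hf_le (L : Chain) (y : X) : f y ≤ chainCost x z₀ L.1 y :=
    ciInf_le (Set.finite_range _).bddBelow L
  have hf_lip : LipschitzWith 1 f := LipschitzWith.of_le_add fun y y' => by
    obtain ⟨L, hL⟩ : ∃ L : Chain, _ = f y' := exists_eq_ciInf_of_finite
    exact (hf_le L y).trans (hL ▸ chainCost_le_add x _ _ y y')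
  refine ⟨f, hf_lip, fun e he => le_antisymm ?_ ?_⟩
  · exact hf_lip.sub_le_dist _ _
  · obtain ⟨L, hL⟩ : ∃ L : Chain, _ = f (x e.1) := exists_eq_ciInf_of_finite
    obtain ⟨L', hnd, hL', hle⟩ := hE.exists_nodup_chainCost_le (L.1 ++ [e])
      (fun c hc => (List.mem_append.1 hc).elim (L.2.2 c) fun hc => List.mem_singleton.1 hc ▸ he)
      z₀ (x e.2)
    have := (hf_le ⟨L', hnd, hL'⟩ _).trans hle
    rw [chainCost_concat, dist_self, hL] at this
    linarith

end Chains

section Transport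
variable {ι : Type*} [Fintype ι]

def couplings (a b : ι → ℝ) : Set (ι × ι → ℝ) :=
  {p | (∀ z, 0 ≤ p z) ∧ (∀ s, ∑ t, p (s, t) = a s) ∧ (∀ t, ∑ s, p (s, t) = b t)}

def transportCost (c p : ι × ι → ℝ) : ℝ := ∑ z, c z * p z

variable {a b : ι → ℝ} {p : ι × ι → ℝ}

lemma le_left_of_mem_couplings (hp : p ∈ couplings a b) (z : ι × ι) : p z ≤ a z.1 :=
  hp.2.1 z.1 ▸ Finset.single_le_sum (fun t _ => hp.1 (z.1, t)) (Finset.mem_univ z.2)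

lemma le_right_of_mem_couplings (hp : p ∈ couplings a b) (z : ι × ι) : p z ≤ b z.2 :=
  hp.2.2 z.2 ▸ Finset.single_le_sum (fun s _ => hp.1 (s, z.2)) (Finset.mem_univ z.1)

lemma comp_swap_mem_couplings (hp : p ∈ couplings a b) : p ∘ Prod.swap ∈ couplings b a :=
  ⟨fun _ => hp.1 _, hp.2.2, hp.2.1⟩

lemma mul_mem_couplings (ha : ∀ i, 0 ≤ a i) (hb : ∀ i, 0 ≤ b i) (hsa : ∑ i, a i = 1)
    (hsb : ∑ i, b i = 1) : (fun z => a z.1 * b z.2) ∈ couplings a b :=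
  ⟨fun _ => mul_nonneg (ha _) (hb _), fun _ => by simp [← Finset.mul_sum, hsb],
    fun _ => by simp [← Finset.sum_mul, hsa]⟩

lemma isCompact_couplings (a b : ι → ℝ) : IsCompact (couplings a b) := by
  refine (isCompact_Icc (a := 0) (b := fun z => a z.1)).of_isClosed_subset ?_
    fun p hp => ⟨hp.1, le_left_of_mem_couplings hp⟩
  simp only [couplings, Set.ofPred_and, Set.ofPred_forall]
  refine .inter (isClosed_iInter fun z => isClosed_le ?_ ?_) (.inter
    (isClosed_iInter fun s => isClosed_eq ?_ ?_) (isClosed_iInter fun t => isClosed_eq ?_ ?_)) <;>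
    fun_prop

lemma sum_sub_mul_eq_of_mem_couplings (hp : p ∈ couplings a b) (g : ι → ℝ) :
    ∑ z, (g z.1 - g z.2) * p z = ∑ i, g i * (a i - b i) := by
  simp only [sub_mul, Finset.sum_sub_distrib, mul_sub]
  congr 1
  · simp [Fintype.sum_prod_type, ← Finset.mul_sum, hp.2.1]
  · simp [Fintype.sum_prod_type_right, ← Finset.mul_sum, hp.2.2]

lemma sum_map_eq_sum_mul_count {α : Type*} [Fintype α] [BEq α] [LawfulBEq α] (φ : α → ℝ)
    (L : List α) : (L.map φ).sum = ∑ z, φ z * L.count z := by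
  induction L with
  | nil => simp
  | cons c L ih =>
    simp only [List.map_cons, List.sum_cons, List.count_cons, Nat.cast_add, mul_add,
      Finset.sum_add_distrib, ← ih]
    rw [Finset.sum_eq_single c (fun b _ hb => by simp [Ne.symm hb]) (by simp)]
    simp [add_comm]

lemma exists_pos_mul_count_le {α : Type*} [BEq α] [LawfulBEq α] {p : α → ℝ} (hp : ∀ z, 0 ≤ p z)
    {C : List α} (hC : ∀ z ∈ C, 0 < p z) : ∃ ε > 0, ∀ z, ε * C.count z ≤ p z := by
  classical
  obtain rfl | hne := eq_or_ne C []
  · exact ⟨1, one_pos, by simpa using hp⟩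
  obtain ⟨w, hw, hw_min⟩ := C.toFinset.exists_min_image p (by simpa using hne)
  have hlen : (0 : ℝ) < C.length := by simpa [List.length_pos_iff] using hne
  refine ⟨p w / C.length, div_pos (hC w (by simpa using hw)) hlen, fun z => ?_⟩
  by_cases hz : z ∈ C
  · calc p w / C.length * C.count z ≤ p w / C.length * C.length := by
          gcongr
          · exact (div_pos (hC w (by simpa using hw)) hlen).le
          · exact_mod_cast List.count_le_length
      _ = p w := div_mul_cancel₀ _ hlen.ne'
      _ ≤ p z := hw_min z (by simpa using hz)
  · simp [List.count_eq_zero_of_not_mem hz, hp z]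

/-- Moving a little mass from the pairs of `C`, all charged by `p`, to the pairs of `C'`, which
have the same sources and targets, keeps `p` a coupling; so by optimality `C'` costs no less. -/
theorem IsMinOn.sum_map_le_of_perm {c : ι × ι → ℝ} (hp : p ∈ couplings a b)
    (hmin : IsMinOn (transportCost c) (couplings a b) p) {C C' : List (ι × ι)}
    (hC : ∀ z ∈ C, 0 < p z) (hfst : (C'.map Prod.fst).Perm (C.map Prod.fst))
    (hsnd : (C'.map Prod.snd).Perm (C.map Prod.snd)) :
    (C.map c).sum ≤ (C'.map c).sum := by
  classical
  obtain ⟨ε, hε, hεC⟩ := exists_pos_mul_count_le hp.1 hC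
  set δ : ι × ι → ℝ := fun z => (C'.count z : ℝ) - C.count z
  have hδ (φ : ι × ι → ℝ) : ∑ z, φ z * δ z = (C'.map φ).sum - (C.map φ).sum := by
    simp [δ, mul_sub, Finset.sum_sub_distrib, sum_map_eq_sum_mul_count]
  have hrow (s : ι) : ∑ t, δ (s, t) = 0 := by
    have key : ∑ z, (if z.1 = s then 1 else 0) * δ z = ∑ t, δ (s, t) := by
      rw [Fintype.sum_prod_type, Finset.sum_eq_single s (by simp_all) (by simp)]
      simp
    rw [← key, hδ, sub_eq_zero]
    simpa [Function.comp_def] using (hfst.map fun i => if i = s then (1 : ℝ) else 0).sum_eq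
  have hcol (t : ι) : ∑ s, δ (s, t) = 0 := by
    have key : ∑ z, (if z.2 = t then 1 else 0) * δ z = ∑ s, δ (s, t) := by
      rw [Fintype.sum_prod_type_right, Finset.sum_eq_single t (by simp_all) (by simp)]
      simp
    rw [← key, hδ, sub_eq_zero]
    simpa [Function.comp_def] using (hsnd.map fun i => if i = t then (1 : ℝ) else 0).sum_eq
  have hq : (fun z => p z + ε * δ z) ∈ couplings a b := by
    refine ⟨fun z => ?_, fun s => ?_, fun t => ?_⟩
    · have := hεC z
      have : (0:ℝ) ≤ ε * C'.count z := by positivity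
      simp only [δ, mul_sub]; linarith
    · simp [Finset.sum_add_distrib, ← Finset.mul_sum, hp.2.1, hrow]
    · simp [Finset.sum_add_distrib, ← Finset.mul_sum, hp.2.2, hcol]
  have := isMinOn_iff.1 hmin _ hq
  simp only [transportCost, mul_add, Finset.sum_add_distrib, mul_left_comm _ ε, ← Finset.mul_sum,
    hδ] at this
  nlinarith

end Transport

section FiniteDuality
variable {ι X : Type*} [MetricSpace X]

lemma chainCost_add_sum_map_eq (x : ι → X) (M : List (ι × ι)) (s t : ι) :
    chainCost x (x t) M (x s) + (M.map fun z => dist (x z.1) (x z.2)).sum =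
      (((M.map Prod.fst ++ [s]).zip (t :: M.map Prod.snd)).map
        fun z => dist (x z.1) (x z.2)).sum := by
  induction M generalizing t with
  | nil => simp [chainCost, dist_comm]
  | cons m M ih =>
    simp only [chainCost, List.map_cons, List.sum_cons, List.cons_append, List.zip_cons_cons, ← ih,
      dist_comm (x t)]
    ring

theorem isCyclicallyMonotone_of_isMinOn [Fintype ι] {x : ι → X} {a b : ι → ℝ} {p : ι × ι → ℝ}
    (hp : p ∈ couplings a b)
    (hmin : IsMinOn (transportCost fun z => dist (x z.1) (x z.2)) (couplings a b) p) :
    IsCyclicallyMonotone x {z | 0 < p z} := by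
  intro e he M hM
  have hlen : (M.map Prod.fst ++ [e.1]).length = (e.2 :: M.map Prod.snd).length := by simp
  -- reroute the cycle `e, M`, sending each source to the target of the previous pair
  have h := hmin.sum_map_le_of_perm hp (C := e :: M)
    (C' := (M.map Prod.fst ++ [e.1]).zip (e.2 :: M.map Prod.snd))
    (List.forall_mem_cons.2 ⟨he, hM⟩)
    (by rw [List.map_fst_zip hlen.le]; exact List.perm_append_singleton _ _)
    (by rw [List.map_snd_zip hlen.ge]; rfl)
  rw [← chainCost_add_sum_map_eq, List.map_cons, List.sum_cons] at h
  linarith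

theorem exists_lipschitzWith_transportCost_eq [Fintype ι] (x : ι → X) {a b : ι → ℝ}
    (ha : ∀ i, 0 ≤ a i) (hb : ∀ i, 0 ≤ b i) (hsa : ∑ i, a i = 1) (hsb : ∑ i, b i = 1) :
    ∃ f : X → ℝ, LipschitzWith 1 f ∧ ∃ p ∈ couplings a b,
      transportCost (fun z => dist (x z.1) (x z.2)) p = ∑ i, f (x i) * (a i - b i) := by
  obtain ⟨p, hp, hmin⟩ := (isCompact_couplings a b).exists_isMinOn
    ⟨_, mul_mem_couplings ha hb hsa hsb⟩
    (f := transportCost fun z => dist (x z.1) (x z.2)) (by unfold transportCost; fun_prop)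
  have : Nonempty X := by
    obtain ⟨i, -, -⟩ := Finset.exists_ne_zero_of_sum_ne_zero (hsa ▸ one_ne_zero)
    exact ⟨x i⟩
  obtain ⟨f, hf, hfE⟩ := (isCyclicallyMonotone_of_isMinOn hp hmin).exists_lipschitzWith_potential
  refine ⟨f, hf, p, hp, ?_⟩
  rw [transportCost, ← sum_sub_mul_eq_of_mem_couplings hp]
  refine Finset.sum_congr rfl fun z _ => ?_
  rcases (hp.1 z).eq_or_lt with h | h
  · simp [← h]
  · rw [hfE z h]

end FiniteDuality

section Marginals
variable {X : Type*} [MeasurableSpace X] {π : Measure (X × X)} {μ ν : Measure X} {F : X → ℝ}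

lemma integral_comp_fst_of_map_fst (h : π.map Prod.fst = μ) (hF : AEStronglyMeasurable F μ) :
    ∫ q, F q.1 ∂π = ∫ y, F y ∂μ := by
  subst h; exact (integral_map measurable_fst.aemeasurable hF).symm

lemma integral_comp_snd_of_map_snd (h : π.map Prod.snd = ν) (hF : AEStronglyMeasurable F ν) :
    ∫ q, F q.2 ∂π = ∫ y, F y ∂ν := by
  subst h; exact (integral_map measurable_snd.aemeasurable hF).symm

lemma integrable_comp_fst_of_map_fst (h : π.map Prod.fst = μ) (hF : Integrable F μ) :
    Integrable (fun q => F q.1) π := by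
  subst h; exact hF.comp_measurable measurable_fst

lemma integrable_comp_snd_of_map_snd (h : π.map Prod.snd = ν) (hF : Integrable F ν) :
    Integrable (fun q => F q.2) π := by
  subst h; exact hF.comp_measurable measurable_snd

end Marginals

section Gluing
variable {X ι : Type*} [MeasurableSpace X] [Fintype ι] {μ ν : Measure X} {T : X → ι}
  {p : ι × ι → ℝ}

noncomputable def glueCoupling (μ ν : Measure X) (T : X → ι) (p : ι × ι → ℝ) :
    Measure (X × X) :=
  ∑ z, ENNReal.ofReal (p z) • (μ[|T ← z.1]).prod (ν[|T ← z.2])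

lemma glueCoupling_map_swap :
    (glueCoupling μ ν T p).map Prod.swap = glueCoupling ν μ T (p ∘ Prod.swap) := by
  rw [glueCoupling, glueCoupling, Measure.map_finset_sum measurable_swap.aemeasurable]
  refine Fintype.sum_equiv (Equiv.prodComm ι ι) _ _ fun z => ?_
  rw [Measure.map_smul, Measure.prod_swap]
  rfl

lemma measure_fiber_ne_zero_of_pos {a : ι → ℝ} (hp : p ∈ couplings a fun i => ν.real (T ⁻¹' {i}))
    {z : ι × ι} (hz : 0 < p z) : ν (T ⁻¹' {z.2}) ≠ 0 := fun h => by
  have := le_right_of_mem_couplings hp z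
  simp [Measure.real, h] at this
  linarith

variable [MeasurableSpace ι] [DiscreteMeasurableSpace ι]

lemma integral_comp_eq_sum [IsFiniteMeasure μ] (hT : Measurable T) (h : ι → ℝ) :
    ∫ y, h (T y) ∂μ = ∑ i, h i * μ.real (T ⁻¹' {i}) := by
  rw [← integral_map hT.aemeasurable Measurable.of_discrete.aestronglyMeasurable,
    integral_fintype Integrable.of_finite]
  simp [map_measureReal_apply hT (measurableSet_singleton _), mul_comm]

variable [IsFiniteMeasure ν]

lemma glueCoupling_map_fst [IsFiniteMeasure μ] (hT : Measurable T)
    (hp : p ∈ couplings (fun i => μ.real (T ⁻¹' {i})) fun i => ν.real (T ⁻¹' {i})) :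
    (glueCoupling μ ν T p).map Prod.fst = μ := by
  have hterm (z : ι × ι) : (ENNReal.ofReal (p z) • (μ[|T ← z.1]).prod (ν[|T ← z.2])).map Prod.fst
      = ENNReal.ofReal (p z) • μ[|T ← z.1] := by
    rw [Measure.map_smul, Measure.map_fst_prod]
    rcases (hp.1 z).eq_or_lt with h | h
    · simp [← h]
    · have := cond_isProbabilityMeasure (measure_fiber_ne_zero_of_pos hp h)
      simp
  calc (glueCoupling μ ν T p).map Prod.fst = ∑ z : ι × ι, ENNReal.ofReal (p z) • μ[|T ← z.1] := by
        simp only [glueCoupling, Measure.map_finset_sum measurable_fst.aemeasurable, hterm]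
    _ = ∑ s, μ (T ⁻¹' {s}) • μ[|T ← s] := by
        rw [Fintype.sum_prod_type]
        refine Finset.sum_congr rfl fun s _ => ?_
        dsimp only
        rw [← Finset.sum_smul, ← ENNReal.ofReal_sum_of_nonneg fun t _ => hp.1 (s, t), hp.2.1 s,
          ofReal_measureReal]
    _ = μ := sum_meas_smul_cond_fiber hT μ

lemma glueCoupling_map_snd [IsFiniteMeasure μ] (hT : Measurable T)
    (hp : p ∈ couplings (fun i => μ.real (T ⁻¹' {i})) fun i => ν.real (T ⁻¹' {i})) :
    (glueCoupling μ ν T p).map Prod.snd = ν := by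
  rw [show (Prod.snd : X × X → X) = Prod.fst ∘ Prod.swap from rfl,
    ← Measure.map_map measurable_fst measurable_swap, glueCoupling_map_swap,
    glueCoupling_map_fst hT (comp_swap_mem_couplings hp)]

lemma isProbabilityMeasure_glueCoupling [IsProbabilityMeasure μ] (hT : Measurable T)
    (hp : p ∈ couplings (fun i => μ.real (T ⁻¹' {i})) fun i => ν.real (T ⁻¹' {i})) :
    IsProbabilityMeasure (glueCoupling μ ν T p) := by
  constructor
  rw [← Set.preimage_univ (f := Prod.fst), ← Measure.map_apply measurable_fst MeasurableSet.univ,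
    glueCoupling_map_fst hT hp, measure_univ]

lemma integral_glueCoupling_comp [IsFiniteMeasure μ] (hT : Measurable T)
    (hp : p ∈ couplings (fun i => μ.real (T ⁻¹' {i})) fun i => ν.real (T ⁻¹' {i}))
    (c : ι × ι → ℝ) : ∫ q, c (T q.1, T q.2) ∂(glueCoupling μ ν T p) = transportCost c p := by
  have hTT : Measurable fun q : X × X => (T q.1, T q.2) := by fun_prop
  have hint (m : Measure (X × X)) [IsFiniteMeasure m] :
      Integrable (fun q => c (T q.1, T q.2)) m :=
    (Integrable.of_finite (f := c)).comp_measurable hTT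
  rw [glueCoupling,
    integral_finsetSum_measure fun z _ => (hint _).smul_measure ENNReal.ofReal_ne_top]
  refine Finset.sum_congr rfl fun z _ => ?_
  rw [integral_smul_measure, ENNReal.toReal_ofReal (hp.1 z), smul_eq_mul, mul_comm]
  rcases (hp.1 z).eq_or_lt with h | h
  · simp [← h]
  have : IsProbabilityMeasure μ[|T ← z.1] := cond_isProbabilityMeasure
    (measure_fiber_ne_zero_of_pos (comp_swap_mem_couplings hp) (z := z.swap) h)
  have := cond_isProbabilityMeasure (measure_fiber_ne_zero_of_pos hp h)
  have hae : ∀ᵐ q ∂(μ[|T ← z.1]).prod (ν[|T ← z.2]), (T q.1, T q.2) = z := by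
    filter_upwards [Measure.quasiMeasurePreserving_fst.ae (ae_cond_mem (hT (.singleton z.1))),
      Measure.quasiMeasurePreserving_snd.ae (ae_cond_mem (hT (.singleton z.2)))] with q h₁ h₂
    exact Prod.ext h₁ h₂
  rw [integral_congr_ae (hae.mono fun q hq => congrArg c hq), integral_const]
  simp

end Gluing

section MetricMeasure
variable {X : Type*} [MetricSpace X] [MeasurableSpace X] {μ ν : Measure X}

lemma LipschitzWith.integrable_of_integrable_dist [OpensMeasurableSpace X] [IsFiniteMeasure μ]
    {f : X → ℝ} {K : NNReal} (hf : LipschitzWith K f) {x₀ : X}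
    (h : Integrable (fun y => dist x₀ y) μ) : Integrable f μ := by
  refine ((integrable_const |f x₀|).add (h.const_mul K)).mono' hf.continuous.aestronglyMeasurable
    (.of_forall fun y => ?_)
  have := hf.dist_le_mul y x₀
  rw [Real.dist_eq, dist_comm] at this
  simp only [Real.norm_eq_abs, Pi.add_apply]
  linarith [abs_sub_abs_le_abs_sub (f y) (f x₀)]

lemma integrable_dist_of_map [SecondCountableTopology X] [OpensMeasurableSpace X]
    {π : Measure (X × X)} (h₁ : π.map Prod.fst = μ) (h₂ : π.map Prod.snd = ν) {x₀ : X}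
    (hμ : Integrable (fun y => dist x₀ y) μ) (hν : Integrable (fun y => dist x₀ y) ν) :
    Integrable (fun q : X × X => dist q.1 q.2) π :=
  ((integrable_comp_fst_of_map_fst h₁ hμ).add (integrable_comp_snd_of_map_snd h₂ hν)).mono'
    continuous_dist.aestronglyMeasurable
    (.of_forall fun q => by simpa using dist_triangle_left q.1 q.2 x₀)

theorem integral_sub_integral_le_integral_dist {π : Measure (X × X)} (h₁ : π.map Prod.fst = μ)
    (h₂ : π.map Prod.snd = ν) {f : X → ℝ} (hf : LipschitzWith 1 f) (hfμ : Integrable f μ)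
    (hfν : Integrable f ν) (hd : Integrable (fun q : X × X => dist q.1 q.2) π) :
    ∫ y, f y ∂μ - ∫ y, f y ∂ν ≤ ∫ q, dist q.1 q.2 ∂π := by
  have hf₁ := integrable_comp_fst_of_map_fst h₁ hfμ
  have hf₂ := integrable_comp_snd_of_map_snd h₂ hfν
  rw [← integral_comp_fst_of_map_fst h₁ hfμ.1, ← integral_comp_snd_of_map_snd h₂ hfν.1,
    ← integral_sub hf₁ hf₂]
  exact integral_mono (hf₁.sub hf₂) hd fun q => hf.sub_le_dist q.1 q.2

lemma abs_integral_comp_sub_integral_le {f : X → ℝ} (hf : LipschitzWith 1 f) {g : X → X}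
    (hfg : Integrable (fun y => f (g y)) μ) (hfμ : Integrable f μ)
    (hd : Integrable (fun y => dist y (g y)) μ) :
    |∫ y, f (g y) ∂μ - ∫ y, f y ∂μ| ≤ ∫ y, dist y (g y) ∂μ := by
  rw [← integral_sub hfg hfμ, ← Real.norm_eq_abs]
  refine norm_integral_le_of_norm_le (f := fun y => f (g y) - f y) hd (.of_forall fun y => ?_)
  simpa [Real.dist_eq, dist_comm y] using hf.dist_le_mul (g y) y

theorem integral_dist_glueCoupling_le {ι : Type*} [Fintype ι] [MeasurableSpace ι]
    [DiscreteMeasurableSpace ι] [IsProbabilityMeasure μ] [IsFiniteMeasure ν] {T : X → ι}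
    {p : ι × ι → ℝ} (x : ι → X) (hT : Measurable T)
    (hp : p ∈ couplings (fun i => μ.real (T ⁻¹' {i})) fun i => ν.real (T ⁻¹' {i}))
    (hμ : Integrable (fun y => dist y (x (T y))) μ)
    (hν : Integrable (fun y => dist y (x (T y))) ν) :
    ∫ q, dist q.1 q.2 ∂(glueCoupling μ ν T p) ≤ transportCost (fun z => dist (x z.1) (x z.2)) p +
      ∫ y, dist y (x (T y)) ∂μ + ∫ y, dist y (x (T y)) ∂ν := by
  have h₁ := glueCoupling_map_fst hT hp
  have h₂ := glueCoupling_map_snd hT hp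
  have := isProbabilityMeasure_glueCoupling hT hp
  have hi₁ := integrable_comp_fst_of_map_fst h₁ hμ
  have hi₂ : Integrable (fun q : X × X => dist (x (T q.1)) (x (T q.2))) (glueCoupling μ ν T p) :=
    (Integrable.of_finite (f := fun z : ι × ι => dist (x z.1) (x z.2))).comp_measurable
      ((hT.comp measurable_fst).prodMk (hT.comp measurable_snd))
  have hi₃ := integrable_comp_snd_of_map_snd h₂ hν
  calc ∫ q, dist q.1 q.2 ∂(glueCoupling μ ν T p)
      ≤ ∫ q, (dist q.1 (x (T q.1)) + dist (x (T q.1)) (x (T q.2)) + dist q.2 (x (T q.2)))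
          ∂(glueCoupling μ ν T p) :=
        integral_mono_of_nonneg (.of_forall fun q => dist_nonneg) ((hi₁.add hi₂).add hi₃)
          (.of_forall fun q => by
            simpa [dist_comm q.2] using dist_triangle4 q.1 (x (T q.1)) (x (T q.2)) q.2)
    _ = _ := by
        rw [integral_add (f := fun q => dist q.1 (x (T q.1)) + dist (x (T q.1)) (x (T q.2)))
          (hi₁.add hi₂) hi₃, integral_add hi₁ hi₂,
          integral_comp_fst_of_map_fst h₁ hμ.1, integral_comp_snd_of_map_snd h₂ hν.1,
          integral_glueCoupling_comp hT hp fun z => dist (x z.1) (x z.2)]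
        ring

end MetricMeasure

section Quantization
variable {X : Type*} [MetricSpace X] [SecondCountableTopology X] [MeasurableSpace X]
  [OpensMeasurableSpace X] {μ : Measure X}

noncomputable def quantize (x₀ : X) (n : ℕ) : SimpleFunc X X :=
  SimpleFunc.approxOn id measurable_id Set.univ x₀ (Set.mem_univ _) n

lemma dist_quantize_le (x₀ : X) (n : ℕ) (y : X) : dist y (quantize x₀ n y) ≤ dist x₀ y := by
  have := SimpleFunc.edist_approxOn_le measurable_id (Set.mem_univ x₀) y n
  rwa [edist_dist, edist_dist, ENNReal.ofReal_le_ofReal_iff dist_nonneg, dist_comm] at this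

lemma integrable_dist_quantize {x₀ : X} (h : Integrable (fun y => dist x₀ y) μ) (n : ℕ) :
    Integrable (fun y => dist y (quantize x₀ n y)) μ :=
  h.mono' (measurable_id.dist (SimpleFunc.measurable _)).aestronglyMeasurable
    (.of_forall fun y => by simpa using dist_quantize_le x₀ n y)

theorem tendsto_integral_dist_quantize {x₀ : X} (h : Integrable (fun y => dist x₀ y) μ) :
    Tendsto (fun n => ∫ y, dist y (quantize x₀ n y) ∂μ) atTop (𝓝 0) := by
  have hlim (y : X) : Tendsto (fun n => dist y (quantize x₀ n y)) atTop (𝓝 0) := by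
    simpa [quantize] using (tendsto_const_nhds (x := y)).dist
      (SimpleFunc.tendsto_approxOn measurable_id (Set.mem_univ x₀) (x := y) (by simp))
  simpa using tendsto_integral_of_dominated_convergence _
    (fun n => (integrable_dist_quantize h n).1) h
    (fun n => .of_forall fun y => by simpa using dist_quantize_le x₀ n y) (.of_forall hlim)

end Quantization

theorem exists_coupling_integral_dist_le {X : Type*} [MetricSpace X] [SecondCountableTopology X]
    [MeasurableSpace X] [OpensMeasurableSpace X] {μ ν : Measure X} [IsProbabilityMeasure μ]
    [IsProbabilityMeasure ν] {x₀ : X} (hμ : Integrable (fun y => dist x₀ y) μ)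
    (hν : Integrable (fun y => dist x₀ y) ν) {ε : ℝ} (hε : 0 < ε) :
    ∃ π : Measure (X × X), IsProbabilityMeasure π ∧ π.map Prod.fst = μ ∧ π.map Prod.snd = ν ∧
      ∃ f : X → ℝ, LipschitzWith 1 f ∧ ∫ q, dist q.1 q.2 ∂π ≤ ∫ y, f y ∂μ - ∫ y, f y ∂ν + ε := by
  have hε4 : ε / 4 ∈ Set.Ioi 0 := by simp [hε]
  obtain ⟨n, hnμ, hnν⟩ := ((tendsto_integral_dist_quantize hμ).eventually (gt_mem_nhds hε4)).and
    ((tendsto_integral_dist_quantize hν).eventually (gt_mem_nhds hε4)) |>.exists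
  set g := quantize x₀ n
  let T : X → g.range := fun y => ⟨g y, g.mem_range_self y⟩
  have hT : Measurable T := g.measurable.subtype_mk
  have hmass (m : Measure X) [IsProbabilityMeasure m] : ∑ i, m.real (T ⁻¹' {i}) = 1 := by
    rw [sum_measureReal_preimage_singleton _ fun i _ => hT (measurableSet_singleton i)]
    simp
  obtain ⟨f, hf, p, hp, hcost⟩ := exists_lipschitzWith_transportCost_eq (Subtype.val : g.range → X)
    (fun _ => measureReal_nonneg) (fun _ => measureReal_nonneg) (hmass μ) (hmass ν)
  have hfg (m : Measure X) [IsProbabilityMeasure m] (hm : Integrable (fun y => dist x₀ y) m) :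
      |∑ i : g.range, f i * m.real (T ⁻¹' {i}) - ∫ y, f y ∂m| ≤ ∫ y, dist y (g y) ∂m := by
    rw [← integral_comp_eq_sum hT fun i => f i]
    exact abs_integral_comp_sub_integral_le hf
      ((Integrable.of_finite (f := fun i : g.range => f i)).comp_measurable hT)
      (hf.integrable_of_integrable_dist hm) (integrable_dist_quantize hm n)
  refine ⟨glueCoupling μ ν T p, isProbabilityMeasure_glueCoupling hT hp,
    glueCoupling_map_fst hT hp, glueCoupling_map_snd hT hp, f, hf, ?_⟩
  have hglue : ∫ q, dist q.1 q.2 ∂(glueCoupling μ ν T p) ≤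
      transportCost (fun z : g.range × g.range => dist (z.1 : X) z.2) p +
        ∫ y, dist y (g y) ∂μ + ∫ y, dist y (g y) ∂ν :=
    integral_dist_glueCoupling_le Subtype.val hT hp (integrable_dist_quantize hμ n)
      (integrable_dist_quantize hν n)
  simp only [hcost, mul_sub, Finset.sum_sub_distrib] at hglue
  linarith [abs_le.1 (hfg μ hμ), abs_le.1 (hfg ν hν)]

theorem stmt_6_general {X : Type*} [MetricSpace X] [TopologicalSpace.SeparableSpace X]
    [MeasurableSpace X] [BorelSpace X] (x₀ : X)
    (μ ν : Measure X) (hμ : MemP1 x₀ μ) (hν : MemP1 x₀ ν) :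
    W1 μ ν = sSup {c : ℝ | ∃ f : X → ℝ, LipschitzWith 1 f ∧
      c = ∫ x, f x ∂μ - ∫ x, f x ∂ν} := by
  have := UniformSpace.secondCountable_of_separable X
  obtain ⟨_, hμ⟩ := hμ
  obtain ⟨_, hν⟩ := hν
  refine csInf_eq_csSup_of_le_of_approx ⟨_, μ.prod ν, inferInstance, by simp, by simp, rfl⟩
    ⟨0, fun _ => 0, LipschitzWith.const' 0, by simp⟩ ?_ fun ε hε => ?_
  · rintro _ ⟨π, -, h₁, h₂, rfl⟩ _ ⟨f, hf, rfl⟩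
    exact integral_sub_integral_le_integral_dist h₁ h₂ hf (hf.integrable_of_integrable_dist hμ)
      (hf.integrable_of_integrable_dist hν) (integrable_dist_of_map h₁ h₂ hμ hν)
  · obtain ⟨π, hπ, h₁, h₂, f, hf, hle⟩ := exists_coupling_integral_dist_le hμ hν hε
    exact ⟨_, ⟨π, hπ, h₁, h₂, rfl⟩, _, ⟨f, hf, rfl⟩, hle⟩

/-- Kantorovich–Rubinstein duality: `W₁(μ,ν)` equals the supremum of `∫ f dμ − ∫ f dν`
over all 1-Lipschitz functions `f`. -/
theorem stmt_6 {X : Type*} [MetricSpace X] [TopologicalSpace.SeparableSpace X]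
    [CompleteSpace X] [MeasurableSpace X] [BorelSpace X] (x₀ : X)
    (μ ν : Measure X) (hμ : MemP1 x₀ μ) (hν : MemP1 x₀ ν) :
    W1 μ ν = sSup {c : ℝ | ∃ f : X → ℝ, LipschitzWith 1 f ∧
      c = ∫ x, f x ∂μ - ∫ x, f x ∂ν} :=
  stmt_6_general x₀ μ ν hμ hν
end

section
/- Let (X, d) be a metric space. For a molecule m (a finitely supported function m : X → ℝ with Σ_x m(x) = 0), define ‖m‖_Æ = inf { Σᵢ |aᵢ| d(xᵢ, yᵢ) : m = Σᵢ aᵢ (1_{xᵢ} − 1_{yᵢ}) }. Then ‖m‖_Æ = sup over 1-Lipschitz f of Σ_x f(x) m(x), and in particular this supremum is attained. -/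
open scoped BigOperators Classical
noncomputable section

/-- The Arens–Eells norm of a molecule, defined as the infimum over elementary
representations `m = Σᵢ aᵢ (1_{xᵢ} − 1_{yᵢ})` of `Σᵢ |aᵢ| d(xᵢ, yᵢ)`. -/
noncomputable def aeNorm {X : Type*} [MetricSpace X] (m : X → ℝ) : ℝ :=
  sInf {s : ℝ | ∃ (n : ℕ) (a : Fin n → ℝ) (x y : Fin n → X),
    (∀ z, m z = ∑ i, a i * ((if z = x i then (1 : ℝ) else 0) -
      (if z = y i then (1 : ℝ) else 0))) ∧
    s = ∑ i, |a i| * dist (x i) (y i)}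

/-!
Pairing a 1-Lipschitz `f` with a representation `m = Σᵢ aᵢ (1_{xᵢ} − 1_{yᵢ})` gives
`Σᵢ aᵢ (f xᵢ − f yᵢ) ≤ Σᵢ |aᵢ| d(xᵢ, yᵢ)`, so the supremum is at most `‖m‖_Æ`. Conversely,
`‖·‖_Æ` is sublinear on the space of molecules, so by Hahn–Banach the functional
`t • m ↦ t ‖m‖_Æ` extends to a linear `g ≤ ‖·‖_Æ`. Fixing a base point `x₀`, the function
`f x := g (1_x − 1_{x₀})` is 1-Lipschitz because `‖1_x − 1_y‖_Æ ≤ d(x, y)`, and it pairs with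
`m = Σ_z m(z) (1_z − 1_{x₀})` to `g m = ‖m‖_Æ`.
-/

namespace ArensEells

open Function Set
open scoped Pointwise

variable {X : Type*}

def dipole (x y : X) : X → ℝ :=
  fun z => (if z = x then (1 : ℝ) else 0) - (if z = y then (1 : ℝ) else 0)

lemma support_dipole_subset (x y : X) : support (dipole x y) ⊆ {x, y} := by
  intro z hz
  by_contra h
  simp only [mem_insert_iff, mem_singleton_iff, not_or] at h
  simp [dipole, h.1, h.2] at hz

lemma finite_support_dipole (x y : X) : (support (dipole x y)).Finite :=
  ((finite_singleton y).insert x).subset (support_dipole_subset x y)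

lemma finsum_mul_dipole (f : X → ℝ) (x y : X) : ∑ᶠ z, f z * dipole x y z = f x - f y := by
  have hsupp : support (fun z => f z * dipole x y z) ⊆ (({x, y} : Finset X) : Set X) := by
    simpa using (support_mul_subset_right _ _).trans (support_dipole_subset x y)
  rw [finsum_eq_sum_of_support_subset _ hsupp]
  by_cases hxy : x = y
  · subst hxy; simp [dipole]
  · simp [Finset.sum_pair hxy, dipole, hxy, Ne.symm hxy, ← sub_eq_add_neg]

lemma dipole_sub_dipole (x y z : X) : dipole x z - dipole y z = dipole x y := by
  ext w; simp only [dipole, Pi.sub_apply]; ring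

variable (X) in
def molecules : Submodule ℝ (X → ℝ) where
  carrier := {m | (support m).Finite ∧ ∑ᶠ x, m x = 0}
  add_mem' := fun {m₁ m₂} h₁ h₂ =>
    ⟨(h₁.1.union h₂.1).subset (support_add _ _), by
      simp only [Pi.add_apply, finsum_add_distrib h₁.1 h₂.1, h₁.2, h₂.2, add_zero]⟩
  zero_mem' := by simp
  smul_mem' := fun c m hm =>
    ⟨hm.1.subset (support_const_smul_subset c m), by
      simp only [Pi.smul_apply, smul_eq_mul, ← mul_finsum, hm.2, mul_zero]⟩

lemma dipole_mem_molecules (x y : X) : dipole x y ∈ molecules X :=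
  ⟨finite_support_dipole x y, by simpa using finsum_mul_dipole (fun _ => (1 : ℝ)) x y⟩

lemma eq_sum_smul_dipole {m : X → ℝ} (hm : m ∈ molecules X) (x₀ : X) :
    m = ∑ z ∈ hm.1.toFinset, m z • dipole z x₀ := by
  have hsum : ∑ z ∈ hm.1.toFinset, m z = 0 := by rw [← finsum_eq_sum m hm.1, hm.2]
  ext w
  simp [Finset.sum_apply, dipole, mul_sub, Finset.sum_sub_distrib, hsum]

variable [MetricSpace X]

def costSet (m : X → ℝ) : Set ℝ :=
  {s | ∃ (n : ℕ) (a : Fin n → ℝ) (x y : Fin n → X),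
    m = ∑ i, a i • dipole (x i) (y i) ∧ s = ∑ i, |a i| * dist (x i) (y i)}

lemma aeNorm_eq_sInf_costSet (m : X → ℝ) : aeNorm m = sInf (costSet m) := by
  simp only [aeNorm, costSet, dipole, funext_iff, Finset.sum_apply, Pi.smul_apply, smul_eq_mul]

lemma nonneg_of_mem_costSet {m : X → ℝ} {s : ℝ} (hs : s ∈ costSet m) : 0 ≤ s := by
  obtain ⟨n, a, x, y, -, rfl⟩ := hs
  positivity

lemma bddBelow_costSet (m : X → ℝ) : BddBelow (costSet m) :=
  ⟨0, fun _ => nonneg_of_mem_costSet⟩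

lemma aeNorm_nonneg (m : X → ℝ) : 0 ≤ aeNorm m :=
  aeNorm_eq_sInf_costSet m ▸ Real.sInf_nonneg fun _ => nonneg_of_mem_costSet

lemma zero_mem_costSet_zero : (0 : ℝ) ∈ costSet (0 : X → ℝ) :=
  ⟨0, 0, finZeroElim, finZeroElim, by simp, by simp⟩

lemma abs_mul_dist_mem_costSet (a : ℝ) (x y : X) : |a| * dist x y ∈ costSet (a • dipole x y) :=
  ⟨1, fun _ => a, fun _ => x, fun _ => y, by simp, by simp⟩

lemma add_subset_costSet_add (m₁ m₂ : X → ℝ) : costSet m₁ + costSet m₂ ⊆ costSet (m₁ + m₂) := by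
  rintro _ ⟨_, ⟨n₁, a₁, x₁, y₁, rfl, rfl⟩, _, ⟨n₂, a₂, x₂, y₂, rfl, rfl⟩, rfl⟩
  exact ⟨n₁ + n₂, Fin.append a₁ a₂, Fin.append x₁ x₂, Fin.append y₁ y₂,
    by simp [Fin.sum_univ_add], by simp [Fin.sum_univ_add]⟩

lemma abs_smul_costSet_subset (c : ℝ) (m : X → ℝ) : |c| • costSet m ⊆ costSet (c • m) := by
  rintro _ ⟨_, ⟨n, a, x, y, rfl, rfl⟩, rfl⟩
  exact ⟨n, c • a, x, y, by simp [Finset.smul_sum, smul_smul],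
    by simp [Finset.mul_sum, abs_mul, mul_assoc]⟩

lemma costSet_smul {c : ℝ} (hc : 0 < c) (m : X → ℝ) : costSet (c • m) = c • costSet m := by
  have hsub : ∀ {c : ℝ}, 0 < c → ∀ m : X → ℝ, c • costSet m ⊆ costSet (c • m) :=
    fun {c} hc m => by simpa [abs_of_pos hc] using abs_smul_costSet_subset c m
  refine Set.Subset.antisymm ?_ (hsub hc m)
  calc costSet (c • m) = c • c⁻¹ • costSet (c • m) := (smul_inv_smul₀ hc.ne' _).symm
    _ ⊆ c • costSet (c⁻¹ • c • m) := Set.smul_set_mono (hsub (inv_pos.2 hc) _)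
    _ = c • costSet m := by rw [inv_smul_smul₀ hc.ne']

lemma costSet_nonempty {m : X → ℝ} (hm : m ∈ molecules X) : (costSet m).Nonempty := by
  rcases isEmpty_or_nonempty X with _ | ⟨⟨x₀⟩⟩
  · exact ⟨0, Subsingleton.elim (0 : X → ℝ) m ▸ zero_mem_costSet_zero⟩
  rw [eq_sum_smul_dipole hm x₀]
  exact Finset.sum_induction _ (fun v => (costSet v).Nonempty)
    (fun _ _ ⟨s, hs⟩ ⟨t, ht⟩ => ⟨s + t, add_subset_costSet_add _ _ (Set.add_mem_add hs ht)⟩)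
    ⟨0, zero_mem_costSet_zero⟩ fun z _ => ⟨_, abs_mul_dist_mem_costSet _ z x₀⟩

lemma aeNorm_zero : aeNorm (0 : X → ℝ) = 0 := by
  refine le_antisymm ?_ (aeNorm_nonneg _)
  rw [aeNorm_eq_sInf_costSet]
  exact csInf_le (bddBelow_costSet _) zero_mem_costSet_zero

lemma aeNorm_dipole_le (x y : X) : aeNorm (dipole x y) ≤ dist x y := by
  rw [aeNorm_eq_sInf_costSet]
  simpa using csInf_le (bddBelow_costSet _) (abs_mul_dist_mem_costSet 1 x y)

lemma aeNorm_smul {c : ℝ} (hc : 0 < c) (m : X → ℝ) : aeNorm (c • m) = c * aeNorm m := by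
  rw [aeNorm_eq_sInf_costSet, aeNorm_eq_sInf_costSet, costSet_smul hc,
    Real.sInf_smul_of_nonneg hc.le, smul_eq_mul]

lemma aeNorm_add_le {m₁ m₂ : X → ℝ} (h₁ : m₁ ∈ molecules X) (h₂ : m₂ ∈ molecules X) :
    aeNorm (m₁ + m₂) ≤ aeNorm m₁ + aeNorm m₂ := by
  simp only [aeNorm_eq_sInf_costSet]
  rw [← csInf_add (costSet_nonempty h₁) (bddBelow_costSet _) (costSet_nonempty h₂)
    (bddBelow_costSet _)]
  exact csInf_le_csInf (bddBelow_costSet _)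
    ((costSet_nonempty h₁).add (costSet_nonempty h₂)) (add_subset_costSet_add m₁ m₂)

lemma finsum_mul_le_of_mem_costSet {f : X → ℝ} (hf : LipschitzWith 1 f) {m : X → ℝ} {s : ℝ}
    (hs : s ∈ costSet m) : ∑ᶠ z, f z * m z ≤ s := by
  obtain ⟨n, a, x, y, rfl, rfl⟩ := hs
  have hpair : ∑ᶠ z, f z * (∑ i, a i • dipole (x i) (y i)) z
      = ∑ i, a i * (f (x i) - f (y i)) := by
    simp only [Finset.sum_apply, Pi.smul_apply, smul_eq_mul, Finset.mul_sum]
    rw [finsum_sum_comm]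
    · refine Finset.sum_congr rfl fun i _ => ?_
      rw [← finsum_mul_dipole, mul_finsum]
      exact finsum_congr fun z => by ring
    · exact fun i _ => (finite_support_dipole (x i) (y i)).subset
        ((support_mul_subset_right _ _).trans (support_mul_subset_right _ _))
  rw [hpair]
  refine Finset.sum_le_sum fun i _ => ?_
  calc a i * (f (x i) - f (y i)) ≤ |a i| * |f (x i) - f (y i)| :=
        (le_abs_self _).trans_eq (abs_mul _ _)
    _ ≤ |a i| * dist (x i) (y i) := by
      gcongr
      simpa [Real.dist_eq] using hf.dist_le_mul (x i) (y i)

lemma finsum_mul_le_aeNorm {m : X → ℝ} (hm : m ∈ molecules X) {f : X → ℝ}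
    (hf : LipschitzWith 1 f) : ∑ᶠ z, f z * m z ≤ aeNorm m :=
  aeNorm_eq_sInf_costSet m ▸
    le_csInf (costSet_nonempty hm) fun _ => finsum_mul_le_of_mem_costSet hf

theorem exists_linearMap_le_aeNorm (m : molecules X) :
    ∃ g : molecules X →ₗ[ℝ] ℝ,
      (∀ v : molecules X, g v ≤ aeNorm (v : X → ℝ)) ∧ g m = aeNorm (m : X → ℝ) := by
  let N : molecules X → ℝ := fun v => aeNorm (v : X → ℝ)
  have hN : ∀ c : ℝ, c • m = 0 → c • N m = 0 := fun c hc => by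
    rcases smul_eq_zero.1 hc with rfl | rfl
    · exact zero_smul _ _
    · simp [N, aeNorm_zero]
  let g₀ : molecules X →ₗ.[ℝ] ℝ := LinearPMap.mkSpanSingleton' m (N m) hN
  have hg₀N : ∀ v : g₀.domain, g₀ v ≤ N v := by
    rintro ⟨_, hv⟩
    obtain ⟨t, rfl⟩ := Submodule.mem_span_singleton.mp hv
    rw [LinearPMap.mkSpanSingleton'_apply, smul_eq_mul]
    rcases le_or_gt t 0 with ht | ht
    · exact (mul_nonpos_of_nonpos_of_nonneg ht (aeNorm_nonneg _)).trans (aeNorm_nonneg _)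
    · exact (aeNorm_smul ht _).ge
  obtain ⟨g, hg_ext, hgN⟩ := exists_extension_of_le_sublinear g₀ N
    (fun c hc v => aeNorm_smul hc _) (fun v w => aeNorm_add_le v.2 w.2) hg₀N
  exact ⟨g, hgN, (hg_ext ⟨m, Submodule.mem_span_singleton_self m⟩).trans
    (LinearPMap.mkSpanSingleton'_apply_self _ _ _ _)⟩

theorem exists_lipschitzWith_finsum_mul_eq_aeNorm {m : X → ℝ} (hm : m ∈ molecules X) :
    ∃ f : X → ℝ, LipschitzWith 1 f ∧ ∑ᶠ z, f z * m z = aeNorm m := by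
  rcases isEmpty_or_nonempty X with _ | ⟨⟨x₀⟩⟩
  · exact ⟨0, LipschitzWith.of_dist_le_mul isEmptyElim,
      by simp [Subsingleton.elim m 0, aeNorm_zero]⟩
  obtain ⟨g, hgN, hgm⟩ := exists_linearMap_le_aeNorm ⟨m, hm⟩
  let δ : X → molecules X := fun x => ⟨dipole x x₀, dipole_mem_molecules x x₀⟩
  refine ⟨fun x => g (δ x), LipschitzWith.of_le_add_mul 1 fun x y => ?_, ?_⟩
  · have hδ : δ x - δ y = ⟨dipole x y, dipole_mem_molecules x y⟩ :=
      Subtype.ext (dipole_sub_dipole x y x₀)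
    have hle := hgN (δ x - δ y)
    rw [map_sub, hδ] at hle
    simp only [NNReal.coe_one, one_mul]
    linarith [aeNorm_dipole_le x y]
  · have hdecomp : (⟨m, hm⟩ : molecules X) = ∑ z ∈ hm.1.toFinset, m z • δ z :=
      Subtype.ext (by simpa [δ] using eq_sum_smul_dipole hm x₀)
    have hsupp : support (fun z => g (δ z) * m z) ⊆ hm.1.toFinset := by simp
    rw [← hgm, hdecomp, map_sum, finsum_eq_sum_of_support_subset _ hsupp]
    simp [mul_comm]

end ArensEells

open ArensEells in
/-- For a molecule `m` (finitely supported, values summing to zero), the Arens–Eells norm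
equals `sup { Σ_x f(x) m(x) : f 1-Lipschitz }`, and this supremum is attained. -/
theorem stmt_8 {X : Type*} [MetricSpace X] (m : X → ℝ)
    (hfin : (Function.support m).Finite) (hsum : ∑ᶠ x, m x = 0) :
    aeNorm m = sSup {t : ℝ | ∃ f : X → ℝ, LipschitzWith 1 f ∧ t = ∑ᶠ x, f x * m x} ∧
    ∃ f : X → ℝ, LipschitzWith 1 f ∧ (∑ᶠ x, f x * m x) = aeNorm m := by
  have hm : m ∈ molecules X := ⟨hfin, hsum⟩
  obtain ⟨f, hf, hfm⟩ := exists_lipschitzWith_finsum_mul_eq_aeNorm hm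
  have hgreatest : IsGreatest {t : ℝ | ∃ f : X → ℝ, LipschitzWith 1 f ∧ t = ∑ᶠ x, f x * m x}
      (aeNorm m) :=
    ⟨⟨f, hf, hfm.symm⟩, by rintro _ ⟨φ, hφ, rfl⟩; exact finsum_mul_le_aeNorm hm hφ⟩
  exact ⟨hgreatest.csSup_eq.symm, f, hf, hfm⟩
end
end
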